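/- arXiv:1405.5110 — 4 statements merged into one kernel-verified Lean document; each statement's English description precedes it below -/
import Mathlib

section
/- Let w : ℝ → ℝ be a Schwartz function. There exists a function F : ℂ → ℂ such that: (i) F(s) = ∫₀^∞ x^{s−1} w(x) dx for every s with Re(s) > 0; (ii) F is complex differentiable at every point of ℂ ∖ {0, −1, −2, …}; (iii) for every integer m ≥ 0, the function s ↦ (s+m)·F(s) extends to a function complex differentiable on a neighbourhood of −m (so F has at most simple poles at the non-positive integers); (iv) for every integer n ≥ 0, all reals a ≤ b, and every δ > 0, there is a constant C > 0 such that |F(s)| ≤ C·(1+|Im(s)|)^{−n} whenever a ≤ Re(s) ≤ b and |s+k| ≥ δ for every integer k ≥ 0. -/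
/-!
Integration by parts gives `s · M f(s) = -M f'(s + 1)` for `0 < re s`, hence
`M f(s) = (-1)^N M f^{(N)}(s + N) / (s (s + 1) ⋯ (s + N - 1))`. The right-hand side is
holomorphic on `-N < re s` away from the zeros `0, -1, …, 1 - N` of the Pochhammer product, which
are simple; these expressions agree where they overlap and so define the continuation. On a
vertical strip, `M f^{(N)}(s + N)` is bounded by the Mellin integrals of `|f^{(N)}|` at the edges,
while each of the `N` factors `s + j` has norm at least `c (1 + |im s|)` once `s` stays `δ` away
from the poles; taking `N ≥ n` gives the decay.
-/

open MeasureTheory Set Filter Asymptotics Topology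
open scoped SchwartzMap

variable {E : Type*} [NormedAddCommGroup E] [NormedSpace ℂ E]

theorem norm_mellin_le_of_mellinConvergent {f : ℝ → E} {a b : ℝ} (ha : MellinConvergent f a)
    (hb : MellinConvergent f b) {s : ℂ} (hsa : a ≤ s.re) (hsb : s.re ≤ b) :
    ‖mellin f s‖ ≤
      ∫ t : ℝ in Ioi 0, ‖(t : ℂ) ^ ((a : ℂ) - 1) • f t‖ + ‖(t : ℂ) ^ ((b : ℂ) - 1) • f t‖ := by
  refine norm_integral_le_of_norm_le (ha.norm.add hb.norm) <|
    (ae_restrict_iff' measurableSet_Ioi).2 (Eventually.of_forall fun t (ht : 0 < t) => ?_)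
  simp only [norm_smul, Complex.norm_cpow_eq_rpow_re_of_pos ht, Complex.sub_re,
    Complex.ofReal_re, Complex.one_re, ← add_mul]
  gcongr
  rcases le_total t 1 with ht₁ | ht₁
  · exact le_add_of_le_of_nonneg (Real.rpow_le_rpow_of_exponent_ge ht ht₁ (by linarith))
      (by positivity)
  · exact le_add_of_nonneg_of_le (by positivity)
      (Real.rpow_le_rpow_of_exponent_le ht₁ (by linarith))

theorem ascPochhammer_eval_ne_zero {R : Type*} [CommRing R] [IsDomain R] {r : R} {N : ℕ}
    (hr : ∀ k < N, r ≠ -(k : R)) : (ascPochhammer R N).eval r ≠ 0 := by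
  rw [Ne, ascPochhammer_eval_eq_zero_iff]
  rintro ⟨k, hk, hkr⟩
  exact hr k hk (by rw [hkr, neg_neg])

theorem pow_le_norm_ascPochhammer_eval {𝕜 : Type*} [NormedField 𝕜] {s : 𝕜} {r : ℝ} {N : ℕ}
    (hr : 0 ≤ r) (h : ∀ j < N, r ≤ ‖s + j‖) : r ^ N ≤ ‖(ascPochhammer 𝕜 N).eval s‖ := by
  induction N with
  | zero => simp
  | succ N ih =>
    rw [ascPochhammer_succ_eval, norm_mul, pow_succ]
    exact mul_le_mul (ih fun j hj => h j (by omega)) (h N (by omega)) hr (norm_nonneg _)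

theorem neg_natCast_ceil_neg_add_one_lt (x : ℝ) : -((⌈-x⌉₊ + 1 : ℕ) : ℝ) < x := by
  push_cast
  linarith [Nat.le_ceil (-x)]

theorem mul_one_add_abs_im_le_norm {z : ℂ} {δ : ℝ} (hδ : 0 < δ) (hz : δ ≤ ‖z‖) :
    min δ 1 / 2 * (1 + |z.im|) ≤ ‖z‖ := by
  have hc : 0 < min δ 1 := lt_min hδ one_pos
  have hcδ := min_le_left δ 1
  have hc₁ := min_le_right δ 1
  have him := Complex.abs_im_le_norm z
  -- `c (1 + |im z|)` is at most `δ` if `|im z| ≤ 1`, and at most `|im z|` otherwise.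
  rcases le_total |z.im| 1 with h | h <;> nlinarith

namespace SchwartzMap

theorem isBigO_atTop_rpow_neg (f : 𝓢(ℝ, E)) (a : ℝ) : (f : ℝ → E) =O[atTop] (· ^ (-a)) := by
  refine ((f.isBigO_cocompact_rpow (-a)).mono atTop_le_cocompact).congr' (by rfl) ?_
  filter_upwards [eventually_ge_atTop 0] with x hx
  rw [Real.norm_of_nonneg hx]

theorem isBigO_nhdsGT_zero_rpow_neg_zero (f : 𝓢(ℝ, E)) :
    (f : ℝ → E) =O[𝓝[>] 0] (· ^ (-(0 : ℝ))) := by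
  simpa only [neg_zero, Real.rpow_zero] using
    ((f.continuous.continuousAt (x := 0)).isBigO_one ℝ).mono nhdsWithin_le_nhds

theorem mellinConvergent (f : 𝓢(ℝ, E)) {s : ℂ} (hs : 0 < s.re) : MellinConvergent f s :=
  mellinConvergent_of_isBigO_rpow (f.continuous.locallyIntegrable.locallyIntegrableOn _)
    (f.isBigO_atTop_rpow_neg _) (lt_add_one s.re) f.isBigO_nhdsGT_zero_rpow_neg_zero hs

theorem differentiableAt_mellin (f : 𝓢(ℝ, E)) {s : ℂ} (hs : 0 < s.re) :
    DifferentiableAt ℂ (mellin f) s :=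
  mellin_differentiableAt_of_isBigO_rpow (f.continuous.locallyIntegrable.locallyIntegrableOn _)
    (f.isBigO_atTop_rpow_neg _) (lt_add_one s.re) f.isBigO_nhdsGT_zero_rpow_neg_zero hs

theorem differentiableAt_smul_mellin (f : 𝓢(ℝ, E)) {c : ℂ → ℂ} {a s : ℂ}
    (hc : DifferentiableAt ℂ c s) (hs : 0 < (s + a).re) :
    DifferentiableAt ℂ (fun z => c z • mellin f (z + a)) s :=
  hc.smul <| DifferentiableAt.comp (g := mellin f) (f := (· + a)) s (f.differentiableAt_mellin hs)
    (differentiableAt_id.add_const a)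

theorem tendsto_cpow_smul_atTop (f : 𝓢(ℝ, E)) (s : ℂ) :
    Tendsto (fun x : ℝ => (x : ℂ) ^ s • f x) atTop (𝓝 0) := by
  have hpow : (fun x : ℝ => (x : ℂ) ^ s) =O[atTop] (· ^ s.re) := by
    refine IsBigO.of_bound 1 ?_
    filter_upwards [eventually_gt_atTop 0] with x hx
    rw [Complex.norm_cpow_eq_rpow_re_of_pos hx, one_mul,
      Real.norm_of_nonneg (Real.rpow_nonneg hx.le _)]
  have hO : (fun x : ℝ => (x : ℂ) ^ s • f x) =O[atTop] (· ^ (-1 : ℝ)) := by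
    refine (hpow.smul (f.isBigO_atTop_rpow_neg (s.re + 1))).congr' (by rfl) ?_
    filter_upwards [eventually_gt_atTop 0] with x hx
    rw [smul_eq_mul, ← Real.rpow_add hx]
    ring_nf
  exact hO.trans_tendsto (tendsto_rpow_neg_atTop one_pos)

/-- `(-1)^N M(f^{(N)})(s + N) / (s)_N`, the result of `N` integrations by parts; at the poles
`s ∈ {0, …, 1 - N}` the division by zero makes it `0`. -/
noncomputable def mellinByParts (f : 𝓢(ℝ, E)) (N : ℕ) (s : ℂ) : E :=
  ((-1) ^ N / (ascPochhammer ℂ N).eval s) • mellin ((derivCLM ℝ E)^[N] f) (s + N)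

theorem mellinByParts_zero (f : 𝓢(ℝ, E)) : mellinByParts f 0 = mellin f := by
  ext s
  simp [mellinByParts]

noncomputable def mellinContinuation (f : 𝓢(ℝ, E)) (s : ℂ) : E :=
  mellinByParts f (⌈-s.re⌉₊ + 1) s

variable [CompleteSpace E]

theorem mellin_derivCLM (f : 𝓢(ℝ, E)) {s : ℂ} (hs : 0 < s.re) :
    mellin (derivCLM ℝ E f) (s + 1) = -(s • mellin f s) := by
  have hs0 : s ≠ 0 := by rintro rfl; simp at hs
  have hderiv : ∀ x ∈ Ioi (0 : ℝ), HasDerivAt (fun x : ℝ => (x : ℂ) ^ s • f x)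
      ((x : ℂ) ^ (s + 1 - 1) • derivCLM ℝ E f x + s • ((x : ℂ) ^ (s - 1) • f x)) x := by
    intro x hx
    have hpow : HasDerivAt (fun y : ℝ => (y : ℂ) ^ s) (s * (x : ℂ) ^ (s - 1)) x := by
      simpa using ((hasDerivAt_id (x : ℂ)).cpow_const (c := s)
        (Complex.ofReal_mem_slitPlane.2 hx)).comp_ofReal
    refine (hpow.smul (f.hasDerivAt x)).congr_deriv ?_
    rw [add_sub_cancel_right, mul_smul, derivCLM_apply, add_comm]
  have hcont : ContinuousWithinAt (fun x : ℝ => (x : ℂ) ^ s • f x) (Ici 0) 0 :=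
    ((Complex.continuousAt_ofReal_cpow_const 0 s (Or.inl hs)).smul
      f.continuous.continuousAt).continuousWithinAt
  have hint₁ := (derivCLM ℝ E f).mellinConvergent (s := s + 1)
    (by simpa using hs.trans (lt_add_one _))
  have hint₂ : IntegrableOn (fun x : ℝ => s • ((x : ℂ) ^ (s - 1) • f x)) (Ioi 0) :=
    (f.mellinConvergent hs).smul s
  have hFTC := integral_Ioi_of_hasDerivAt_of_tendsto hcont hderiv (hint₁.add hint₂)
    (f.tendsto_cpow_smul_atTop s)
  rw [integral_add hint₁ hint₂, integral_smul, Complex.ofReal_zero, Complex.zero_cpow hs0,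
    zero_smul, sub_zero] at hFTC
  exact eq_neg_of_add_eq_zero_left hFTC

theorem mellinByParts_succ (f : 𝓢(ℝ, E)) {N : ℕ} {s : ℂ} (hs : -(N : ℝ) < s.re) :
    mellinByParts f (N + 1) s = mellinByParts f N s := by
  have hsN : 0 < (s + N).re := by rw [Complex.add_re, Complex.natCast_re]; linarith
  have hsN₀ : s + N ≠ 0 := fun h => by simp [h] at hsN
  rw [mellinByParts, mellinByParts, Function.iterate_succ_apply', Nat.cast_succ, ← add_assoc,
    mellin_derivCLM _ hsN, ← neg_smul, smul_smul, ascPochhammer_succ_eval]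
  congr 1
  rw [div_mul_eq_mul_div, pow_succ, mul_assoc, neg_one_mul, neg_neg, mul_div_mul_right _ _ hsN₀]

theorem mellinByParts_eq_of_le (f : 𝓢(ℝ, E)) {N M : ℕ} (hNM : N ≤ M) {s : ℂ}
    (hs : -(N : ℝ) < s.re) : mellinByParts f M s = mellinByParts f N s := by
  induction M, hNM using Nat.le_induction with
  | base => rfl
  | succ M hNM ih =>
    rw [mellinByParts_succ f (lt_of_le_of_lt (by gcongr) hs), ih]

theorem mellinContinuation_eq (f : 𝓢(ℝ, E)) {N : ℕ} {s : ℂ}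
    (hs : -(N : ℝ) < s.re) : mellinContinuation f s = mellinByParts f N s := by
  have hs' := neg_natCast_ceil_neg_add_one_lt s.re
  rw [mellinContinuation, ← mellinByParts_eq_of_le f (le_max_left _ N) hs',
    mellinByParts_eq_of_le f (le_max_right _ N) hs]

theorem mellinContinuation_eq_mellin (f : 𝓢(ℝ, E)) {s : ℂ} (hs : 0 < s.re) :
    mellinContinuation f s = mellin f s := by
  rw [mellinContinuation_eq f (N := 0) (by simpa using hs), mellinByParts_zero]

theorem mellinContinuation_eventuallyEq (f : 𝓢(ℝ, E)) {N : ℕ} {s : ℂ}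
    (hs : -(N : ℝ) < s.re) : mellinContinuation f =ᶠ[𝓝 s] mellinByParts f N :=
  eventually_of_mem ((isOpen_lt continuous_const Complex.continuous_re).mem_nhds hs)
    fun _ hz => mellinContinuation_eq f hz

theorem differentiableAt_mellinContinuation (f : 𝓢(ℝ, E)) {s : ℂ}
    (hs : ∀ m : ℕ, s ≠ -(m : ℂ)) : DifferentiableAt ℂ (mellinContinuation f) s := by
  have hN := neg_natCast_ceil_neg_add_one_lt s.re
  refine DifferentiableAt.congr_of_eventuallyEq ?_ (mellinContinuation_eventuallyEq f hN)
  refine differentiableAt_smul_mellin _ ((differentiableAt_const _).div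
    (Polynomial.differentiableAt _) (ascPochhammer_eval_ne_zero fun k _ => hs k)) ?_
  rw [Complex.add_re, Complex.natCast_re]
  linarith

theorem exists_differentiableOn_smul_mellinContinuation (f : 𝓢(ℝ, E)) (m : ℕ) :
    ∃ G : ℂ → E, ∃ U ∈ 𝓝 (-(m : ℂ)), DifferentiableOn ℂ G U ∧
      ∀ s ∈ U, s ≠ -(m : ℂ) → G s = (s + m) • mellinContinuation f s := by
  set P : ℂ → ℂ := fun z => (ascPochhammer ℂ m).eval z
  set U : Set ℂ := {z | -((m + 1 : ℕ) : ℝ) < z.re} ∩ {z | P z ≠ 0}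
  have hU : IsOpen U :=
    (isOpen_lt continuous_const Complex.continuous_re).inter
      (isOpen_ne_fun (Polynomial.continuous _) continuous_const)
  have hmU : -(m : ℂ) ∈ U := by
    refine ⟨by push_cast; simp, ascPochhammer_eval_ne_zero fun k hk hkm => ?_⟩
    exact hk.ne (by exact_mod_cast neg_injective hkm.symm)
  refine ⟨fun z => ((-1) ^ (m + 1) / P z) • mellin ((derivCLM ℝ E)^[m + 1] f) (z + (m + 1 : ℕ)),
    U, hU.mem_nhds hmU, fun z hz => ?_, fun z hz hzm => ?_⟩
  · refine (differentiableAt_smul_mellin _ ((differentiableAt_const _).div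
      (Polynomial.differentiableAt _) hz.2) ?_).differentiableWithinAt
    have hzre : -((m + 1 : ℕ) : ℝ) < z.re := hz.1
    rw [Complex.add_re, Complex.natCast_re]
    linarith
  · have hzm₀ : z + m ≠ 0 := fun h => hzm (eq_neg_of_add_eq_zero_left h)
    rw [mellinContinuation_eq f hz.1, mellinByParts, smul_smul, ascPochhammer_succ_eval,
      mul_div_assoc', mul_comm (P z), mul_div_mul_left _ _ hzm₀]

theorem exists_norm_mellinContinuation_le (f : 𝓢(ℝ, E)) (n : ℕ) (a b : ℝ)
    {δ : ℝ} (hδ : 0 < δ) : ∃ C : ℝ, 0 < C ∧ ∀ s : ℂ, a ≤ s.re → s.re ≤ b →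
      (∀ k : ℕ, δ ≤ ‖s + k‖) → ‖mellinContinuation f s‖ ≤ C / (1 + |s.im|) ^ n := by
  set N := n + ⌈-a⌉₊ + 1
  have haN : 0 < a + N := by
    push_cast [N]
    linarith [Nat.le_ceil (-a), (n.cast_nonneg : (0 : ℝ) ≤ n)]
  set g := (derivCLM ℝ E)^[N] f
  set B := ∫ t : ℝ in Ioi 0, ‖(t : ℂ) ^ (((a + N : ℝ) : ℂ) - 1) • g t‖ +
    ‖(t : ℂ) ^ (((b + N : ℝ) : ℂ) - 1) • g t‖
  have hB : 0 ≤ B := integral_nonneg fun _ => by positivity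
  set c := min δ 1 / 2
  have hc : 0 < c := by positivity
  refine ⟨(B + 1) / c ^ N, by positivity, fun s hsa hsb hs => ?_⟩
  have hP : c ^ N * (1 + |s.im|) ^ n ≤ ‖(ascPochhammer ℂ N).eval s‖ := by
    calc c ^ N * (1 + |s.im|) ^ n ≤ (c * (1 + |s.im|)) ^ N := by
          rw [mul_pow]
          gcongr
          · linarith [abs_nonneg s.im]
          · omega
      _ ≤ _ := pow_le_norm_ascPochhammer_eval (by positivity) fun j _ => by
          simpa using mul_one_add_abs_im_le_norm hδ (hs j)
  have hM : ‖mellin g (s + N)‖ ≤ B :=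
    norm_mellin_le_of_mellinConvergent (g.mellinConvergent (by simpa using haN))
      (g.mellinConvergent (by simpa using haN.trans_le (by gcongr; linarith)))
      (by simp [hsa]) (by simp [hsb])
  rw [mellinContinuation_eq f (N := N) (by linarith), mellinByParts, norm_smul, norm_div,
    norm_pow, norm_neg, norm_one, one_pow, one_div_mul_eq_div, div_div]
  exact div_le_div₀ (by positivity) (by linarith) (by positivity) hP

end SchwartzMap

/-- The Mellin transform of a Schwartz function `w` has a meromorphic
continuation `F` to `ℂ`, holomorphic away from the non-positive integers, with at most simple
poles there, and with rapid decay on vertical strips away from the poles. -/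
theorem mellin_schwartz_continuation (w : SchwartzMap ℝ ℝ) :
    ∃ F : ℂ → ℂ,
      (∀ s : ℂ, 0 < s.re →
        F s = ∫ x in Set.Ioi (0 : ℝ), (x : ℂ) ^ (s - 1) * (w x : ℂ)) ∧
      (∀ s : ℂ, (∀ m : ℕ, s ≠ -(m : ℂ)) → DifferentiableAt ℂ F s) ∧
      (∀ m : ℕ, ∃ G : ℂ → ℂ, ∃ U ∈ nhds (-(m : ℂ)),
        DifferentiableOn ℂ G U ∧ ∀ s ∈ U, s ≠ -(m : ℂ) → G s = (s + (m : ℂ)) * F s) ∧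
      (∀ n : ℕ, ∀ a b : ℝ, a ≤ b → ∀ δ : ℝ, 0 < δ → ∃ C : ℝ, 0 < C ∧
        ∀ s : ℂ, a ≤ s.re → s.re ≤ b → (∀ k : ℕ, δ ≤ ‖s + (k : ℂ)‖) →
          ‖F s‖ ≤ C / (1 + |s.im|) ^ n) := by
  set f : 𝓢(ℝ, ℂ) := SchwartzMap.postcompCLM Complex.ofRealCLM w
  refine ⟨f.mellinContinuation, fun s hs => ?_,
    fun s hs => f.differentiableAt_mellinContinuation hs,
    fun m => f.exists_differentiableOn_smul_mellinContinuation m,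
    fun n a b _ δ hδ => f.exists_norm_mellinContinuation_le n a b hδ⟩
  rw [f.mellinContinuation_eq_mellin hs]
  rfl
end

section
/- Let w : ℝ → ℝ be a Schwartz function and let N be a positive integer. For every s ∈ ℂ with Re(s) > 1/2, the function x ↦ x^{s−1} w̃(x) is integrable on (0,∞) and ∫₀^∞ x^{s−1} w̃(x) dx = (∏_{p | N} (1 − p^{−2s})) · ζ(2s) · ∫₀^∞ x^{s−1} w(x) dx, where the product runs over the primes p dividing N and ζ denotes the Riemann zeta function. -/
open MeasureTheory

/-- For a Schwartz function `w : ℝ → ℝ` and a positive integer `N`, the function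
`w̃(x) = ∑_{n ≥ 1, gcd(n,N) = 1} w(n² x)`. -/
noncomputable def wtilde (w : ℝ → ℝ) (N : ℕ) (x : ℝ) : ℝ :=
  ∑' n : ℕ, if 0 < n ∧ Nat.Coprime n N then w ((n : ℝ) ^ 2 * x) else 0

/-!
The substitution `x ↦ x / n²` gives `∫ x^{s-1} w(n² x) dx = n^{-2s} ∫ x^{s-1} w(x) dx`, and the
same computation for absolute values bounds the `n`-th term by `n^{-2 Re s}` times a fixed
constant. For `Re s > 1/2` these bounds are summable, so the series defining `w̃` may be
integrated term by term. What remains is the Dirichlet series `∑_{(n,N)=1} n^{-2s}`, the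
`L`-series of the trivial character mod `N`, which is `ζ(2s)` with the Euler factors at the
primes dividing `N` removed.
-/

open Set Filter

theorem MeasureTheory.Integrable.tsum_of_summable_integral_norm {α E ι : Type*}
    [MeasurableSpace α] {μ : Measure α} [NormedAddCommGroup E] [CompleteSpace E] [Countable ι]
    {F : ι → α → E} (hF_int : ∀ i, Integrable (F i) μ)
    (hF_sum : Summable fun i ↦ ∫ a, ‖F i a‖ ∂μ) :
    Integrable (fun a ↦ ∑' i, F i a) μ := by
  have hL1 : ∑' i, ‖(hF_int i).toL1 (F i)‖ₑ ≠ ⊤ := by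
    rw [tsum_enorm_ne_top_iff_summable_norm]
    simpa only [L1.norm_of_fun_eq_integral_norm] using hF_sum
  refine (L1.integrable_coeFn (∑' i, (hF_int i).toL1 (F i))).congr ?_
  filter_upwards [Lp.coeFn_tsum hL1, ae_all_iff.mpr fun i ↦ (hF_int i).coeFn_toL1] with a ha hF
  rw [ha]
  exact tsum_congr hF

section MellinDilation

variable {E : Type*} [NormedAddCommGroup E] [NormedSpace ℂ E] {f : ℝ → E} {s : ℂ}

theorem integral_norm_cpow_smul_comp_mul_left_Ioi {a : ℝ} (ha : 0 < a) :
    ∫ t in Ioi (0 : ℝ), ‖(t : ℂ) ^ (s - 1) • f (a * t)‖ =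
      a ^ (-s.re) * ∫ t in Ioi (0 : ℝ), ‖(t : ℂ) ^ (s - 1) • f t‖ := by
  have h_pt : EqOn (fun t : ℝ ↦ ‖(t : ℂ) ^ (s - 1) • f (a * t)‖)
      (fun t ↦ a ^ (1 - s.re) * ‖((a * t : ℝ) : ℂ) ^ (s - 1) • f (a * t)‖) (Ioi 0) := by
    intro t (ht : 0 < t)
    simp only [norm_smul, Complex.norm_cpow_eq_rpow_re_of_pos ht,
      Complex.norm_cpow_eq_rpow_re_of_pos (mul_pos ha ht), Complex.sub_re, Complex.one_re,
      Real.mul_rpow ha.le ht.le, ← mul_assoc, ← Real.rpow_add ha]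
    simp
  rw [setIntegral_congr_fun measurableSet_Ioi h_pt, integral_const_mul,
    integral_comp_mul_left_Ioi (fun t ↦ ‖(t : ℂ) ^ (s - 1) • f t‖) 0 ha, mul_zero, smul_eq_mul,
    ← mul_assoc, ← Real.rpow_neg_one, ← Real.rpow_add ha]
  ring_nf

variable {ι : Type*} {a : ι → ℝ}

theorem summable_integral_norm_cpow_smul_comp_mul_left_Ioi (ha : ∀ i, 0 < a i)
    (hsum : Summable fun i ↦ a i ^ (-s.re)) :
    Summable fun i ↦ ∫ t in Ioi (0 : ℝ), ‖(t : ℂ) ^ (s - 1) • f (a i * t)‖ := by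
  simp_rw [integral_norm_cpow_smul_comp_mul_left_Ioi (ha _)]
  exact hsum.mul_right _

theorem hasMellin_tsum_comp_mul_left [Countable ι] [CompleteSpace E] (hf : MellinConvergent f s)
    (ha : ∀ i, 0 < a i) (hsum : Summable fun i ↦ a i ^ (-s.re)) :
    HasMellin (fun t ↦ ∑' i, f (a i * t)) s ((∑' i, (a i : ℂ) ^ (-s)) • mellin f s) := by
  have h_int i : IntegrableOn (fun t : ℝ ↦ (t : ℂ) ^ (s - 1) • f (a i * t)) (Ioi 0) :=
    (MellinConvergent.comp_mul_left (ha i)).mpr hf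
  have h_sum := summable_integral_norm_cpow_smul_comp_mul_left_Ioi (f := f) ha hsum
  have h_smul_tsum (t : ℝ) : (t : ℂ) ^ (s - 1) • ∑' i, f (a i * t) =
      ∑' i, (t : ℂ) ^ (s - 1) • f (a i * t) := (tsum_const_smul'' _).symm
  have hsum_cpow : Summable fun i ↦ (a i : ℂ) ^ (-s) := by
    refine .of_norm (hsum.congr fun i ↦ ?_)
    rw [Complex.norm_cpow_eq_rpow_re_of_pos (ha i), Complex.neg_re]
  refine ⟨?_, ?_⟩
  · simp only [MellinConvergent, h_smul_tsum]
    exact Integrable.tsum_of_summable_integral_norm h_int h_sum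
  · simp only [mellin, h_smul_tsum]
    rw [← integral_tsum_of_summable_integral_norm h_int h_sum, ← hsum_cpow.tsum_smul_const]
    exact tsum_congr fun i ↦ mellin_comp_mul_left f s (ha i)

end MellinDilation

theorem SchwartzMap.mellinConvergent_ofReal (w : SchwartzMap ℝ ℝ) {s : ℂ} (hs : 0 < s.re) :
    MellinConvergent (fun x ↦ (w x : ℂ)) s := by
  have hcont : Continuous fun x ↦ (w x : ℂ) := Complex.continuous_ofReal.comp w.continuous
  refine mellinConvergent_of_isBigO_rpow (a := s.re + 1) (b := 0)
    (hcont.locallyIntegrable.locallyIntegrableOn _) ?_ (lt_add_one _) ?_ hs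
  · have hw : (fun x ↦ (w x : ℂ)) =O[atTop] fun x ↦ ‖x‖ ^ (-(s.re + 1)) :=
      (Asymptotics.isBigO_norm_left.mp (by simpa only [Complex.norm_real] using
        (w.isBigO_cocompact_rpow (-(s.re + 1))).norm_left)).mono atTop_le_cocompact
    refine hw.congr' .rfl ?_
    filter_upwards [eventually_ge_atTop 0] with x hx
    rw [Real.norm_of_nonneg hx]
  · simpa only [neg_zero, Real.rpow_zero] using
      ((hcont.tendsto 0).mono_left nhdsWithin_le_nhds).isBigO_one ℝ

theorem tsum_coprime_cpow_neg_eq_prod_mul_riemannZeta (N : ℕ) [NeZero N] {s : ℂ}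
    (hs : 1 < s.re) :
    ∑' n : {n : ℕ | 0 < n ∧ n.Coprime N}, (n : ℂ) ^ (-s) =
      (∏ p ∈ N.primeFactors, (1 - (p : ℂ) ^ (-s))) * riemannZeta s := by
  have hs_ne_one : s ≠ 1 := ne_of_apply_ne Complex.re (by simpa using hs.ne')
  rw [← DirichletCharacter.LFunctionTrivChar_eq_mul_riemannZeta hs_ne_one,
    DirichletCharacter.LFunctionTrivChar, DirichletCharacter.LFunction_eq_LSeries _ hs, LSeries,
    tsum_subtype _ fun n : ℕ ↦ (n : ℂ) ^ (-s)]
  refine tsum_congr fun n ↦ ?_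
  rcases Nat.eq_zero_or_pos n with rfl | hn
  · simp
  have hunit : IsUnit (n : ZMod N) ↔ n.Coprime N := ZMod.isUnit_iff_coprime n N
  rw [LSeries.term_of_ne_zero hn.ne', indicator_apply]
  by_cases hcop : n.Coprime N
  · rw [if_pos ⟨hn, hcop⟩, MulChar.one_apply (hunit.mpr hcop), Complex.cpow_neg, one_div]
  · rw [if_neg fun h ↦ hcop h.2, MulChar.map_nonunit _ (hunit.not.mpr hcop), zero_div]

theorem wtilde_eq_tsum_coprime (w : ℝ → ℝ) (N : ℕ) (x : ℝ) :
    wtilde w N x = ∑' n : {n : ℕ | 0 < n ∧ n.Coprime N}, w ((n : ℝ) ^ 2 * x) := by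
  simp only [wtilde, tsum_subtype _ fun n : ℕ ↦ w ((n : ℝ) ^ 2 * x), indicator_apply]
  rfl

/-- For `Re s > 1/2`, the Mellin transform of `w̃` exists and equals
`(∏_{p ∣ N} (1 - p^{-2s})) ζ(2s)` times the Mellin transform of `w`. -/
theorem mellin_wtilde_eq (w : SchwartzMap ℝ ℝ) (N : ℕ) (hN : 0 < N)
    (s : ℂ) (hs : 1 / 2 < s.re) :
    IntegrableOn (fun x : ℝ => (x : ℂ) ^ (s - 1) * Complex.ofReal (wtilde (⇑w) N x))
      (Set.Ioi 0) ∧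
    (∫ x in Set.Ioi (0 : ℝ), (x : ℂ) ^ (s - 1) * Complex.ofReal (wtilde (⇑w) N x))
      = (∏ p ∈ N.primeFactors, (1 - (p : ℂ) ^ (-(2 * s)))) * riemannZeta (2 * s)
        * ∫ x in Set.Ioi (0 : ℝ), (x : ℂ) ^ (s - 1) * (w x : ℂ) := by
  have : NeZero N := ⟨hN.ne'⟩
  have h2s : 1 < (2 * s).re := by
    simp only [Complex.mul_re, Complex.re_ofNat, Complex.im_ofNat, zero_mul, sub_zero]
    linarith
  have hsum : Summable fun n : {n : ℕ | 0 < n ∧ n.Coprime N} ↦ ((n : ℝ) ^ 2) ^ (-s.re) := by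
    refine ((Real.summable_nat_rpow.mpr (by linarith : -(2 * s.re) < -1)).subtype _).congr
      fun n ↦ ?_
    simp [← Real.rpow_natCast_mul]
  have hdirichlet : ∑' n : {n : ℕ | 0 < n ∧ n.Coprime N}, (((n : ℝ) ^ 2 : ℝ) : ℂ) ^ (-s) =
      (∏ p ∈ N.primeFactors, (1 - (p : ℂ) ^ (-(2 * s)))) * riemannZeta (2 * s) := by
    rw [← tsum_coprime_cpow_neg_eq_prod_mul_riemannZeta N h2s]
    refine tsum_congr fun n ↦ ?_
    push_cast
    rw [← Complex.natCast_cpow_natCast_mul]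
    ring_nf
  have key := hasMellin_tsum_comp_mul_left (w.mellinConvergent_ofReal (by linarith))
    (fun n ↦ pow_pos (Nat.cast_pos.mpr n.2.1) 2) hsum
  simp only [← Complex.ofReal_tsum, ← wtilde_eq_tsum_coprime, hdirichlet] at key
  -- `HasMellin` unfolds to the claim, `•` on `ℂ` being `*`.
  exact key
end

section
/- Let w : ℝ → ℝ be an even, nonnegative Schwartz function which is not identically zero, and let N be a positive integer. Then there exist constants c₁, c₂ > 0 and x₀ ∈ (0,1] such that c₁·x^{−1/2} ≤ w̃(x) ≤ c₂·x^{−1/2} for all real x with 0 < x ≤ x₀. -/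
open Finset Filter Topology

/-!
Write `x = t⁻²`. Since both `w` and `y ↦ y w(y)` are bounded, the terms of `w̃(x)` with `n ≤ t`
are `O(1)` and those with `n > t` are `O(t² / n²)`, so `w̃(x) = O(t)`. Conversely `y ↦ w(y²)` is
at least some `δ > 0` on an interval `[a, b] ⊂ (0, ∞)`, and `w(n²x) = w((n / t)²)`: once `t` is
large, at least `(b - a) t / (2N)` integers `n ≡ 1 (mod N)`, all coprime to `N`, satisfy
`n / t ∈ [a, b]`, so `w̃(x) ≥ δ (b - a) t / (2N)`.
-/

theorem sum_range_le_of_le_of_sq_mul_le {f : ℕ → ℝ} {A t : ℝ} (hf : ∀ n, 0 ≤ f n)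
    (hA : ∀ n, f n ≤ A) (hsq : ∀ n : ℕ, (n : ℝ) ^ 2 * f n ≤ A * t ^ 2) (ht : 1 ≤ t) (K : ℕ) :
    ∑ n ∈ range K, f n ≤ 5 * A * t := by
  have hA₀ : 0 ≤ A := (hf 0).trans (hA 0)
  set m := ⌈t⌉₊
  have hmt : t ≤ m := Nat.le_ceil t
  have hm : (m : ℝ) < t + 1 := Nat.ceil_lt_add_one (by linarith)
  have head : ∑ n ∈ range (m + 1), f n ≤ 3 * A * t := calc
    _ ≤ ∑ n ∈ range (m + 1), A := sum_le_sum fun n _ => hA n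
    _ = (m + 1) * A := by simp
    _ ≤ 3 * A * t := by nlinarith
  have tail : ∑ n ∈ Ioo m K, f n ≤ 2 * A * t := calc
    _ ≤ ∑ n ∈ Ioo m K, A * t ^ 2 * ((n : ℝ) ^ 2)⁻¹ := by
      refine sum_le_sum fun n hn => ?_
      have hn : (0 : ℝ) < n := by exact_mod_cast (Nat.zero_le m).trans_lt (mem_Ioo.1 hn).1
      rw [le_mul_inv_iff₀ (by positivity), mul_comm]
      exact hsq n
    _ = A * t ^ 2 * ∑ n ∈ Ioo m K, ((n : ℝ) ^ 2)⁻¹ := by rw [mul_sum]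
    _ ≤ A * t ^ 2 * (2 / (m + 1)) := by gcongr; exact sum_Ioo_inv_sq_le m K
    _ ≤ A * t ^ 2 * (2 / t) := by gcongr; linarith
    _ = 2 * A * t := by field_simp
  calc ∑ n ∈ range K, f n ≤ ∑ n ∈ range (m + 1) ∪ Ioo m K, f n := by
        refine sum_le_sum_of_subset_of_nonneg (fun n hn => ?_) fun n _ _ => hf n
        simp only [mem_union, mem_range, mem_Ioo] at hn ⊢
        omega
    _ = ∑ n ∈ range (m + 1), f n + ∑ n ∈ Ioo m K, f n := by
        refine sum_union (disjoint_left.2 fun n hn hn' => ?_)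
        simp only [mem_range, mem_Ioo] at hn hn'
        omega
    _ ≤ 5 * A * t := by linarith

theorem exists_finset_card_ge_one_add_mul_mem_Icc {N : ℕ} (hN : 0 < N) {u v : ℝ} (hu : 0 ≤ u)
    (hv : 1 ≤ v) : ∃ K : Finset ℕ, (v - u - 1) / N - 1 ≤ #K ∧
      ∀ k ∈ K, u ≤ 1 + N * (k : ℝ) ∧ 1 + N * (k : ℝ) ≤ v := by
  have hN' : (0 : ℝ) < N := by exact_mod_cast hN
  refine ⟨Icc ⌈u / N⌉₊ ⌊(v - 1) / N⌋₊, ?_, fun k hk => ?_⟩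
  · have h₁ : (⌈u / N⌉₊ : ℝ) < u / N + 1 := Nat.ceil_lt_add_one (by positivity)
    have h₂ : (v - 1) / N < ⌊(v - 1) / N⌋₊ + 1 := Nat.lt_floor_add_one _
    have h₃ : (⌊(v - 1) / N⌋₊ + 1 - ⌈u / N⌉₊ : ℝ) ≤ #(Icc ⌈u / N⌉₊ ⌊(v - 1) / N⌋₊) := by
      rw [Nat.card_Icc, sub_le_iff_le_add]; exact_mod_cast le_tsub_add
    have : (v - u - 1) / N = (v - 1) / N - u / N := by ring
    linarith
  · obtain ⟨hk₁, hk₂⟩ := mem_Icc.1 hk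
    rw [Nat.ceil_le, div_le_iff₀ hN'] at hk₁
    rw [Nat.le_floor_iff (div_nonneg (by linarith) hN'.le), le_div_iff₀ hN'] at hk₂
    constructor <;> linarith

theorem ContinuousAt.exists_Icc_pos_lower_bound {g : ℝ → ℝ} {q : ℝ} (hg : ContinuousAt g q)
    (hq : 0 ≤ q) (hgq : 0 < g q) :
    ∃ a b δ : ℝ, 0 < a ∧ a < b ∧ 0 < δ ∧ ∀ y ∈ Set.Icc a b, δ ≤ g y := by
  have hev : ∀ᶠ y in 𝓝[>] q, g q / 2 < g y :=
    nhdsWithin_le_nhds (hg.eventually (lt_mem_nhds (half_lt_self hgq)))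
  obtain ⟨u, (hqu : q < u), hsub⟩ := mem_nhdsGT_iff_exists_Ioo_subset.1 hev
  refine ⟨q + (u - q) / 3, q + 2 * (u - q) / 3, g q / 2, by linarith, by linarith, by linarith,
    fun y hy => (hsub ⟨?_, ?_⟩).le⟩ <;> linarith [hy.1, hy.2]

theorem SchwartzMap.exists_abs_le_and_abs_mul_abs_le (w : SchwartzMap ℝ ℝ) :
    ∃ C, 0 < C ∧ ∀ y, |w y| ≤ C ∧ |y| * |w y| ≤ C := by
  obtain ⟨C₀, hC₀, h₀⟩ := w.decay 0 0
  obtain ⟨C₁, -, h₁⟩ := w.decay 1 0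
  simp only [pow_zero, pow_one, one_mul, norm_iteratedFDeriv_zero, Real.norm_eq_abs] at h₀ h₁
  exact ⟨max C₀ C₁, lt_max_of_lt_left hC₀, fun y =>
    ⟨(h₀ y).trans (le_max_left _ _), (h₁ y).trans (le_max_right _ _)⟩⟩

/-- The summand of `wtilde`: `wtilde w N x` unfolds to `∑' n, wtildeTerm w N x n`. -/
noncomputable def wtildeTerm (w : ℝ → ℝ) (N : ℕ) (x : ℝ) (n : ℕ) : ℝ :=
  if 0 < n ∧ Nat.Coprime n N then w ((n : ℝ) ^ 2 * x) else 0

theorem wtildeTerm_nonneg {w : ℝ → ℝ} (hw : ∀ y, 0 ≤ w y) (N : ℕ) (x : ℝ) (n : ℕ) :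
    0 ≤ wtildeTerm w N x n := by
  unfold wtildeTerm
  split_ifs
  exacts [hw _, le_rfl]

theorem exists_summable_wtildeTerm_and_wtilde_le (w : SchwartzMap ℝ ℝ) (hnonneg : ∀ y, 0 ≤ w y)
    (N : ℕ) : ∃ C, 0 < C ∧ ∀ x t : ℝ, 1 ≤ t → t ^ 2 * x = 1 →
      Summable (wtildeTerm w N x) ∧ wtilde w N x ≤ C * t := by
  obtain ⟨C, hC, hw⟩ := w.exists_abs_le_and_abs_mul_abs_le
  refine ⟨5 * C, by positivity, fun x t ht htx => ?_⟩
  have hf := wtildeTerm_nonneg hnonneg N x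
  have hA : ∀ n, wtildeTerm w N x n ≤ C := by
    intro n
    unfold wtildeTerm
    split_ifs
    exacts [(le_abs_self _).trans (hw _).1, hC.le]
  have hsq : ∀ n : ℕ, (n : ℝ) ^ 2 * wtildeTerm w N x n ≤ C * t ^ 2 := by
    intro n
    unfold wtildeTerm
    split_ifs
    · set y := (n : ℝ) ^ 2 * x
      calc (n : ℝ) ^ 2 * w y = t ^ 2 * (y * w y) := by
            linear_combination (-(n : ℝ) ^ 2 * w y) * htx
        _ ≤ t ^ 2 * C := by
          gcongr
          exact (le_abs_self _).trans ((abs_mul y (w y)).trans_le (hw y).2)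
        _ = C * t ^ 2 := mul_comm _ _
    · simp only [mul_zero]; positivity
  have key := sum_range_le_of_le_of_sq_mul_le hf hA hsq ht
  exact ⟨summable_of_sum_range_le hf key, Real.tsum_le_of_sum_range_le hf key⟩

theorem exists_le_wtilde (w : SchwartzMap ℝ ℝ) (heven : ∀ y, w (-y) = w y)
    (hnonneg : ∀ y, 0 ≤ w y) (hne : ∃ y, w y ≠ 0) {N : ℕ} (hN : 0 < N) : ∃ c, 0 < c ∧ ∃ T, 1 ≤ T ∧
      ∀ x t : ℝ, T ≤ t → t ^ 2 * x = 1 → Summable (wtildeTerm w N x) →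
        c * t ≤ wtilde w N x := by
  obtain ⟨p, hp⟩ := hne
  have hpos : 0 < w (√|p| ^ 2) := by
    rw [Real.sq_sqrt (abs_nonneg p)]
    rcases abs_choice p with h | h <;> rw [h]
    · exact (hnonneg p).lt_of_ne' hp
    · rw [heven]; exact (hnonneg p).lt_of_ne' hp
  obtain ⟨a, b, δ, ha, hab, hδ, hg⟩ := ContinuousAt.exists_Icc_pos_lower_bound
    (w.continuous.comp (continuous_pow 2)).continuousAt (Real.sqrt_nonneg _) hpos
  have hN' : (0 : ℝ) < N := by exact_mod_cast hN
  have hba : 0 < b - a := sub_pos.2 hab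
  refine ⟨δ * (b - a) / (2 * N), by positivity, max 1 (2 * (N + 1) / (b - a)), le_max_left _ _,
    fun x t hTt htx hs => ?_⟩
  have ht : 0 < t := one_pos.trans_le ((le_max_left _ _).trans hTt)
  have hlarge : 2 * (N + 1) ≤ (b - a) * t :=
    (div_le_iff₀' hba).1 ((le_max_right _ _).trans hTt)
  obtain ⟨K, hK, hKmem⟩ := exists_finset_card_ge_one_add_mul_mem_Icc hN (u := a * t) (v := b * t)
    (by positivity) (by nlinarith)
  have hcard : (b - a) * t / (2 * N) ≤ #K := by
    refine le_trans ?_ hK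
    rw [div_sub_one hN'.ne', div_le_div_iff₀ (by positivity) hN']
    nlinarith
  have hf := wtildeTerm_nonneg hnonneg N x
  have hinj : Function.Injective fun k : ℕ => 1 + N * k :=
    fun k l h => Nat.eq_of_mul_eq_mul_left hN (Nat.add_left_cancel h)
  have hterm : ∀ k ∈ K, δ ≤ wtildeTerm w N x (1 + N * k) := by
    intro k hk
    have hcop : Nat.Coprime (1 + N * k) N :=
      (Nat.coprime_add_mul_left_left 1 N k).2 (Nat.coprime_one_left N)
    have hsq : ((1 + N * k : ℕ) : ℝ) ^ 2 * x = ((1 + N * k) / t) ^ 2 := by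
      field_simp
      push_cast
      linear_combination (1 + N * (k : ℝ)) ^ 2 * htx
    obtain ⟨h₁, h₂⟩ := hKmem k hk
    rw [wtildeTerm, if_pos ⟨by omega, hcop⟩, hsq]
    exact hg _ ⟨(le_div_iff₀ ht).2 h₁, (div_le_iff₀ ht).2 h₂⟩
  calc δ * (b - a) / (2 * N) * t = (b - a) * t / (2 * N) * δ := by ring
    _ ≤ #K * δ := by gcongr
    _ = ∑ k ∈ K, δ := by simp
    _ ≤ ∑ k ∈ K, wtildeTerm w N x (1 + N * k) := sum_le_sum hterm
    _ ≤ ∑' k, wtildeTerm w N x (1 + N * k) :=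
      (hs.comp_injective hinj).sum_le_tsum K fun k _ => hf _
    _ ≤ wtilde w N x := tsum_comp_le_tsum_of_inj hs hf hinj

theorem Real.rpow_neg_half_sq_mul {x : ℝ} (hx : 0 < x) : (x ^ (-(1 : ℝ) / 2)) ^ 2 * x = 1 := by
  rw [← Real.rpow_mul_natCast hx.le, ← Real.rpow_add_one hx.ne']
  norm_num

/-- For an even, nonnegative Schwartz function `w`, not identically zero,
one has `w̃(x) ≍ x^{-1/2}` as `x → 0⁺`. -/
theorem wtilde_asymp_zero (w : SchwartzMap ℝ ℝ) (heven : ∀ x : ℝ, w (-x) = w x)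
    (hnonneg : ∀ x : ℝ, 0 ≤ w x) (hne : ∃ x : ℝ, w x ≠ 0) (N : ℕ) (hN : 0 < N) :
    ∃ c₁ c₂ x₀ : ℝ, 0 < c₁ ∧ 0 < c₂ ∧ 0 < x₀ ∧ x₀ ≤ 1 ∧
      ∀ x : ℝ, 0 < x → x ≤ x₀ →
        c₁ * x ^ (-(1 : ℝ) / 2) ≤ wtilde (⇑w) N x ∧
          wtilde (⇑w) N x ≤ c₂ * x ^ (-(1 : ℝ) / 2) := by
  obtain ⟨c₂, hc₂, hupper⟩ := exists_summable_wtildeTerm_and_wtilde_le w hnonneg N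
  obtain ⟨c₁, hc₁, T, hT, hlower⟩ := exists_le_wtilde w heven hnonneg hne hN
  refine ⟨c₁, c₂, (T ^ 2)⁻¹, hc₁, hc₂, by positivity, inv_le_one_of_one_le₀ (one_le_pow₀ hT),
    fun x hx hxT => ?_⟩
  set t := x ^ (-(1 : ℝ) / 2)
  have htx : t ^ 2 * x = 1 := Real.rpow_neg_half_sq_mul hx
  have hTt : T ≤ t := by
    refine le_of_pow_le_pow_left₀ two_ne_zero (by positivity) ?_
    rw [eq_inv_of_mul_eq_one_left htx]
    exact (le_inv_comm₀ hx (by positivity)).1 hxT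
  obtain ⟨hs, hle⟩ := hupper x t (hT.trans hTt) htx
  exact ⟨hlower x t hTt htx hs, hle⟩
end

section
/- Let N be a positive integer and let s ∈ ℂ with Re(s) > 1. Then (∑_{d ≥ 1, d squarefree, gcd(d,N)=1} (log d)·d^{−s}) · (∏_{p | N} (1 − p^{−2s})) · ζ(2s) = −(∏_{p | N} (1 − p^{−s})) · (ζ′(s) − 2·ζ(s)·ζ′(2s)/ζ(2s) + ζ(s)·∑_{p | N} log p/(p^{s}+1)), where the sums and products over p run over the primes dividing N, and the series on the left converges absolutely. -/
/-!
Let `f` be the indicator of squarefree integers coprime to `N` and `χ₀` the trivial Dirichlet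
character mod `N`. Every `n ≥ 1` is uniquely `d m²` with `d` squarefree, so `f ⍟ (χ₀ · 𝟙_squares)`
is `χ₀`, which gives `L(f, s) L(χ₀, 2s) = L(χ₀, s)` for `Re s > 1`, where
`L(χ₀, s) = ζ(s) ∏_{p ∣ N} (1 - p^{-s})`. The series in the theorem is `-L(f, s)'`; taking
logarithmic derivatives of the identity, the Euler factors at `p ∣ N` contribute
`log p / (p^s - 1) - 2 log p / (p^{2s} - 1) = log p / (p^s + 1)`.
-/

open Complex LSeries Filter
open scoped LSeries.notation Topology

lemma one_lt_norm_natCast_cpow {p : ℕ} (hp : 1 < p) {z : ℂ} (hz : 0 < z.re) :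
    1 < ‖(p : ℂ) ^ z‖ := by
  rw [norm_natCast_cpow_of_pos (by omega)]
  exact Real.one_lt_rpow (by exact_mod_cast hp) hz

lemma natCast_cpow_ne_one {p : ℕ} (hp : 1 < p) {z : ℂ} (hz : 0 < z.re) : (p : ℂ) ^ z ≠ 1 :=
  fun h => by simpa [h] using one_lt_norm_natCast_cpow hp hz

lemma natCast_cpow_add_one_ne_zero {p : ℕ} (hp : 1 < p) {z : ℂ} (hz : 0 < z.re) :
    (p : ℂ) ^ z + 1 ≠ 0 :=
  fun h => by simpa [eq_neg_of_add_eq_zero_left h] using one_lt_norm_natCast_cpow hp hz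

lemma one_sub_natCast_cpow_neg_ne_zero {p : ℕ} (hp : 1 < p) {z : ℂ} (hz : 0 < z.re) :
    1 - (p : ℂ) ^ (-z) ≠ 0 := by
  rw [cpow_neg, sub_ne_zero, ne_comm, inv_ne_one]
  exact natCast_cpow_ne_one hp hz

lemma differentiableAt_one_sub_natCast_cpow_neg {p : ℕ} (hp : p ≠ 0) (z : ℂ) :
    DifferentiableAt ℂ (fun w => 1 - (p : ℂ) ^ (-w)) z := by
  have : (p : ℂ) ≠ 0 := by exact_mod_cast hp
  fun_prop (disch := simp [this])

lemma logDeriv_one_sub_natCast_cpow_neg {p : ℕ} (hp : 1 < p) {z : ℂ} (hz : 0 < z.re) :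
    logDeriv (fun w => 1 - (p : ℂ) ^ (-w)) z = Real.log p / ((p : ℂ) ^ z - 1) := by
  have hp0 : (p : ℂ) ≠ 0 := by exact_mod_cast (show p ≠ 0 by omega)
  have hderiv : HasDerivAt (fun w => 1 - (p : ℂ) ^ (-w)) (Real.log p * (p : ℂ) ^ (-z)) z := by
    have := ((hasDerivAt_neg z).const_cpow (c := (p : ℂ)) (.inl hp0)).const_sub 1
    refine this.congr_deriv ?_
    rw [natCast_log]; ring
  have hpz : (p : ℂ) ^ z ≠ 0 := cpow_ne_zero_iff.mpr (.inl hp0)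
  have hpz1 : (p : ℂ) ^ z - 1 ≠ 0 := sub_ne_zero.mpr (natCast_cpow_ne_one hp hz)
  rw [logDeriv_apply, hderiv.deriv, cpow_neg]
  field_simp

lemma div_natCast_cpow_sub_one_sub_two_mul {p : ℕ} (hp : 1 < p) {z : ℂ} (hz : 0 < z.re) :
    Real.log p / ((p : ℂ) ^ z - 1) - 2 * (Real.log p / ((p : ℂ) ^ (2 * z) - 1))
      = Real.log p / ((p : ℂ) ^ z + 1) := by
  have h1 : (p : ℂ) ^ z - 1 ≠ 0 := sub_ne_zero.mpr (natCast_cpow_ne_one hp hz)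
  have h2 := natCast_cpow_add_one_ne_zero hp hz
  rw [cpow_ofNat_mul, show ((p : ℂ) ^ z) ^ 2 - 1 = ((p : ℂ) ^ z - 1) * ((p : ℂ) ^ z + 1) by ring]
  field_simp
  ring

noncomputable def riemannZetaWithout (S : Finset ℕ) (w : ℂ) : ℂ :=
  (∏ p ∈ S, (1 - (p : ℂ) ^ (-w))) * riemannZeta w

section riemannZetaWithout

variable {S : Finset ℕ} (hS : ∀ p ∈ S, 1 < p) {z : ℂ}
include hS

lemma riemannZetaWithout_ne_zero (hz : 1 < z.re) : riemannZetaWithout S z ≠ 0 :=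
  mul_ne_zero (Finset.prod_ne_zero_iff.mpr fun p hp =>
    one_sub_natCast_cpow_neg_ne_zero (hS p hp) (by linarith))
    (riemannZeta_ne_zero_of_one_lt_re hz)

lemma differentiableAt_riemannZetaWithout (hz : z ≠ 1) :
    DifferentiableAt ℂ (riemannZetaWithout S) z :=
  (DifferentiableAt.fun_finsetProd fun p hp =>
    differentiableAt_one_sub_natCast_cpow_neg (by have := hS p hp; omega) z).mul
    (differentiableAt_riemannZeta hz)

lemma logDeriv_riemannZetaWithout (hz : 1 < z.re) :
    logDeriv (riemannZetaWithout S) z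
      = ∑ p ∈ S, Real.log p / ((p : ℂ) ^ z - 1) + logDeriv riemannZeta z := by
  have hz0 : 0 < z.re := by linarith
  have hz1 : z ≠ 1 := by rintro rfl; simp at hz
  unfold riemannZetaWithout
  rw [logDeriv_mul (f := fun w => ∏ p ∈ S, (1 - (p : ℂ) ^ (-w))) z _
    (riemannZeta_ne_zero_of_one_lt_re hz) _ (differentiableAt_riemannZeta hz1), logDeriv_prod]
  · exact congrArg (· + _) (Finset.sum_congr rfl fun p hp =>
      logDeriv_one_sub_natCast_cpow_neg (hS p hp) hz0)
  · exact fun p hp => one_sub_natCast_cpow_neg_ne_zero (hS p hp) hz0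
  · exact fun p hp => differentiableAt_one_sub_natCast_cpow_neg (by have := hS p hp; omega) z
  · exact Finset.prod_ne_zero_iff.mpr fun p hp => one_sub_natCast_cpow_neg_ne_zero (hS p hp) hz0
  · exact DifferentiableAt.fun_finsetProd fun p hp =>
      differentiableAt_one_sub_natCast_cpow_neg (by have := hS p hp; omega) z

lemma logDeriv_riemannZetaWithout_sub_two_mul (hz : 1 < z.re) :
    logDeriv (riemannZetaWithout S) z - 2 * logDeriv (riemannZetaWithout S) (2 * z)
      = logDeriv riemannZeta z - 2 * logDeriv riemannZeta (2 * z)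
        + ∑ p ∈ S, Real.log p / ((p : ℂ) ^ z + 1) := by
  rw [logDeriv_riemannZetaWithout hS hz, logDeriv_riemannZetaWithout hS (by simp; linarith),
    ← Finset.sum_congr rfl fun p hp => div_natCast_cpow_sub_one_sub_two_mul (hS p hp)
      (by linarith), Finset.sum_sub_distrib, ← Finset.mul_sum]
  ring

end riemannZetaWithout

lemma logDeriv_eq_sub_of_mul_comp_const_mul_eq {F G : ℂ → ℂ} {c s : ℂ}
    (hF : DifferentiableAt ℂ F s) (hGcs : DifferentiableAt ℂ G (c * s)) (hGs0 : G s ≠ 0)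
    (hGcs0 : G (c * s) ≠ 0) (h : ∀ᶠ w in 𝓝 s, F w * G (c * w) = G w) :
    logDeriv F s = logDeriv G s - c * logDeriv G (c * s) := by
  have hFs0 : F s ≠ 0 := left_ne_zero_of_mul (h.self_of_nhds ▸ hGs0)
  have hcomp : DifferentiableAt ℂ (fun w => G (c * w)) s :=
    hGcs.comp s (differentiableAt_id.const_mul c)
  have key := (logDeriv_congr_nhds h).self_of_nhds
  rw [logDeriv_mul s hFs0 hGcs0 hF hcomp,
    show (fun w => G (c * w)) = G ∘ (c * ·) from rfl,
    logDeriv_comp hGcs (differentiableAt_id.const_mul c), deriv_const_mul_field',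
    deriv_id''] at key
  linear_combination key

noncomputable def squarefreeIndicator : ℕ → ℂ := fun n => if Squarefree n then 1 else 0

noncomputable def squareIndicator : ℕ → ℂ := fun n => if IsSquare n then 1 else 0

lemma norm_squarefreeIndicator_le_one (n : ℕ) : ‖squarefreeIndicator n‖ ≤ 1 := by
  unfold squarefreeIndicator; split <;> simp

lemma norm_squareIndicator_le_one (n : ℕ) : ‖squareIndicator n‖ ≤ 1 := by
  unfold squareIndicator; split <;> simp

lemma Nat.eq_and_eq_of_squarefree_of_mul_sq_eq {a b c d : ℕ} (ha : Squarefree a)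
    (hc : Squarefree c) (hb : b ≠ 0) (h : a * b ^ 2 = c * d ^ 2) : a = c ∧ b = d := by
  have hd : d ≠ 0 := by rintro rfl; simp [ha.ne_zero, hb] at h
  have hac : a = c := by
    refine Nat.factorization_inj ha.ne_zero hc.ne_zero (Finsupp.ext fun p => ?_)
    have hp := congrArg (·.factorization p) h
    simp only [Nat.factorization_mul ha.ne_zero (pow_ne_zero 2 hb),
      Nat.factorization_mul hc.ne_zero (pow_ne_zero 2 hd), Nat.factorization_pow,
      Finsupp.add_apply, Finsupp.smul_apply, smul_eq_mul] at hp
    have := ha.natFactorization_le_one p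
    have := hc.natFactorization_le_one p
    omega
  subst hac
  exact ⟨rfl, Nat.pow_left_injective two_ne_zero (Nat.eq_of_mul_eq_mul_left
    (Nat.pos_of_ne_zero ha.ne_zero) h)⟩

lemma squarefreeIndicator_convolution_squareIndicator {n : ℕ} (hn : n ≠ 0) :
    (squarefreeIndicator ⍟ squareIndicator) n = 1 := by
  obtain ⟨a, b, hn_eq, ha⟩ := Nat.sq_mul_squarefree n
  have hb : b ≠ 0 := by rintro rfl; simp [← hn_eq] at hn
  have hmem : (a, b ^ 2) ∈ n.divisorsAntidiagonal :=
    Nat.mem_divisorsAntidiagonal.mpr ⟨by rw [← hn_eq, mul_comm], hn⟩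
  rw [LSeries.convolution_def]
  dsimp only
  rw [Finset.sum_eq_single_of_mem _ hmem]
  · simp [squarefreeIndicator, squareIndicator, ha, IsSquare.sq]
  rintro ⟨d, m⟩ hdm hne
  simp only [squarefreeIndicator, squareIndicator, mul_ite, mul_one, mul_zero]
  split_ifs with hm hd
  · obtain ⟨c, rfl⟩ := hm
    have hdc : a * b ^ 2 = d * c ^ 2 := by
      rw [mul_comm, hn_eq, ← (Nat.mem_divisorsAntidiagonal.mp hdm).1, sq]
    obtain ⟨rfl, rfl⟩ := Nat.eq_and_eq_of_squarefree_of_mul_sq_eq ha hd hb hdc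
    exact absurd (by rw [sq]) hne
  all_goals rfl

lemma LSeries_eq_LSeries_comp_sq {f : ℕ → ℂ} (hf : ∀ n, ¬ IsSquare n → f n = 0) (z : ℂ) :
    LSeries f z = LSeries (fun k => f (k ^ 2)) (2 * z) := by
  have hsupp : Function.support (term f z) ⊆ Set.range (· ^ 2) := by
    intro n hn
    by_contra hsq
    exact hn (by rw [term_def, hf n fun ⟨r, hr⟩ => hsq ⟨r, by simp [hr, sq]⟩]; simp)
  rw [LSeries, ← (Nat.pow_left_injective two_ne_zero).tsum_eq hsupp, LSeries]
  congr 1 with k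
  rcases eq_or_ne k 0 with rfl | hk
  · simp
  rw [term_of_ne_zero (pow_ne_zero 2 hk), term_of_ne_zero hk, Nat.cast_pow,
    ← natCast_cpow_natCast_mul]
  norm_num

lemma LSeriesSummable_of_norm_le_one {f : ℕ → ℂ} (hf : ∀ n, ‖f n‖ ≤ 1) {z : ℂ}
    (hz : 1 < z.re) : LSeriesSummable f z :=
  LSeriesSummable_of_bounded_of_one_lt_re (fun n _ => hf n) hz

namespace DirichletCharacter

variable {N : ℕ}

lemma LSeries_mul_squareIndicator (χ : DirichletCharacter ℂ N) (z : ℂ) :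
    LSeries (↗χ * squareIndicator) z = LSeries ↗(χ ^ 2) (2 * z) := by
  rw [LSeries_eq_LSeries_comp_sq (fun n hn => by simp [squareIndicator, hn])]
  congr 1 with k
  simp [squareIndicator, IsSquare.sq, MulChar.pow_apply' χ two_ne_zero]

lemma abscissaOfAbsConv_mul_squarefreeIndicator_le_one (χ : DirichletCharacter ℂ N) :
    abscissaOfAbsConv (↗χ * squarefreeIndicator) ≤ 1 :=
  abscissaOfAbsConv_le_of_le_const ⟨1, fun n _ => by
    simpa using mul_le_one₀ (χ.norm_le_one _) (norm_nonneg _) (norm_squarefreeIndicator_le_one n)⟩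

lemma LSeries_mul_squarefreeIndicator_mul_LSeries_sq (χ : DirichletCharacter ℂ N) {z : ℂ}
    (hz : 1 < z.re) :
    LSeries (↗χ * squarefreeIndicator) z * LSeries ↗(χ ^ 2) (2 * z) = LSeries ↗χ z := by
  rw [← LSeries_mul_squareIndicator, ← LSeries_convolution'
    (LSeriesSummable_mul χ (LSeriesSummable_of_norm_le_one norm_squarefreeIndicator_le_one hz))
    (LSeriesSummable_mul χ (LSeriesSummable_of_norm_le_one norm_squareIndicator_le_one hz)),
    mul_convolution_distrib]
  exact LSeries_congr (fun hn => by
    rw [Pi.mul_apply, squarefreeIndicator_convolution_squareIndicator hn, mul_one]) z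

lemma one_apply_natCast (n : ℕ) :
    (1 : DirichletCharacter ℂ N) n = if n.Coprime N then 1 else 0 := by
  split_ifs with h
  · exact MulChar.one_apply ((ZMod.isUnit_iff_coprime n N).mpr h)
  · exact MulChar.map_nonunit _ (mt (ZMod.isUnit_iff_coprime n N).mp h)

lemma LSeries_one_eq_riemannZetaWithout [NeZero N] {z : ℂ} (hz : 1 < z.re) :
    LSeries ↗(1 : DirichletCharacter ℂ N) z = riemannZetaWithout N.primeFactors z := by
  rw [← LFunction_eq_LSeries _ hz]
  exact LFunctionTrivChar_eq_mul_riemannZeta fun h => by simp [h] at hz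

lemma term_logMul_one_mul_squarefreeIndicator (s : ℂ) (d : ℕ) :
    term (logMul (↗(1 : DirichletCharacter ℂ N) * squarefreeIndicator)) s d
      = if Squarefree d ∧ d.Coprime N then (Real.log d : ℂ) * (d : ℂ) ^ (-s) else 0 := by
  rcases eq_or_ne d 0 with rfl | hd
  · simp
  rw [term_of_ne_zero hd, logMul, Pi.mul_apply, one_apply_natCast, squarefreeIndicator,
    ← natCast_log, cpow_neg, div_eq_mul_inv]
  by_cases hsq : Squarefree d <;> by_cases hcop : d.Coprime N <;> simp [hsq, hcop]

lemma LSeries_one_mul_squarefreeIndicator_mul_riemannZetaWithout [NeZero N] {z : ℂ}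
    (hz : 1 < z.re) :
    LSeries (↗(1 : DirichletCharacter ℂ N) * squarefreeIndicator) z
        * riemannZetaWithout N.primeFactors (2 * z)
      = riemannZetaWithout N.primeFactors z := by
  have h2z : 1 < (2 * z).re := by simp; linarith
  have := LSeries_mul_squarefreeIndicator_mul_LSeries_sq (1 : DirichletCharacter ℂ N) hz
  rwa [one_pow, LSeries_one_eq_riemannZetaWithout hz, LSeries_one_eq_riemannZetaWithout h2z] at this

end DirichletCharacter

open DirichletCharacter in
/-- Identity for the logarithmically weighted squarefree Dirichlet series:
for `Re s > 1`,
`(∑_{d ≥ 1 squarefree, (d,N)=1} (log d) d^{-s}) (∏_{p∣N} (1-p^{-2s})) ζ(2s)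
 = −(∏_{p∣N} (1-p^{-s})) (ζ′(s) − 2ζ(s)ζ′(2s)/ζ(2s) + ζ(s) ∑_{p∣N} log p/(p^s+1))`,
with the series on the left converging absolutely. -/
theorem squarefree_log_dirichlet_identity (N : ℕ) (hN : 0 < N) (s : ℂ) (hs : 1 < s.re) :
    Summable (fun d : ℕ =>
      ‖if Squarefree d ∧ Nat.Coprime d N
          then (Real.log d : ℂ) * (d : ℂ) ^ (-s) else 0‖) ∧
    (∑' d : ℕ, if Squarefree d ∧ Nat.Coprime d N
        then (Real.log d : ℂ) * (d : ℂ) ^ (-s) else 0)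
      * (∏ p ∈ N.primeFactors, (1 - (p : ℂ) ^ (-(2 * s)))) * riemannZeta (2 * s)
      = -(∏ p ∈ N.primeFactors, (1 - (p : ℂ) ^ (-s)))
        * (deriv riemannZeta s
            - 2 * riemannZeta s * deriv riemannZeta (2 * s) / riemannZeta (2 * s)
            + riemannZeta s * ∑ p ∈ N.primeFactors, (Real.log p : ℂ) / ((p : ℂ) ^ s + 1)) := by
  have : NeZero N := ⟨hN.ne'⟩
  simp_rw [← term_logMul_one_mul_squarefreeIndicator]
  set f := ↗(1 : DirichletCharacter ℂ N) * squarefreeIndicator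
  set G := riemannZetaWithout N.primeFactors
  have hprimes : ∀ p ∈ N.primeFactors, 1 < p := fun p hp =>
    (Nat.prime_of_mem_primeFactors hp).one_lt
  have hs2 : 1 < (2 * s).re := by simp; linarith
  have habs : abscissaOfAbsConv f < s.re :=
    (abscissaOfAbsConv_mul_squarefreeIndicator_le_one 1).trans_lt (by exact_mod_cast hs)
  have hfG : ∀ᶠ w in 𝓝 s, LSeries f w * G (2 * w) = G w :=
    eventually_of_mem ((continuous_re.isOpen_preimage _ isOpen_Ioi).mem_nhds hs)
      fun w hw => LSeries_one_mul_squarefreeIndicator_mul_riemannZetaWithout hw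
  have hlog := logDeriv_eq_sub_of_mul_comp_const_mul_eq (LSeries_hasDerivAt habs).differentiableAt
    (differentiableAt_riemannZetaWithout hprimes fun h => by simp [h] at hs2)
    (riemannZetaWithout_ne_zero hprimes hs) (riemannZetaWithout_ne_zero hprimes hs2) hfG
  rw [logDeriv_riemannZetaWithout_sub_two_mul hprimes hs, logDeriv_apply,
    (LSeries_hasDerivAt habs).deriv, logDeriv_apply, logDeriv_apply] at hlog
  have hF := hfG.self_of_nhds
  have hLf : LSeries f s ≠ 0 :=
    left_ne_zero_of_mul (hF.trans_ne (riemannZetaWithout_ne_zero hprimes hs))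
  have hZ := riemannZeta_ne_zero_of_one_lt_re hs
  have hZ2 := riemannZeta_ne_zero_of_one_lt_re hs2
  simp only [G, riemannZetaWithout] at hF
  refine ⟨(LSeriesSummable_logMul_of_lt_re habs).norm, ?_⟩
  calc _ = -(LSeries f s * ((∏ p ∈ N.primeFactors, (1 - (p : ℂ) ^ (-(2 * s))))
          * riemannZeta (2 * s))) * (-LSeries (logMul f) s / LSeries f s) := by
        rw [← LSeries]; field_simp
    _ = _ := by rw [hF, hlog]; field_simp
end
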